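/- Let u : ℝ^d → ℝ be continuous, ℤ^d-periodic, and K-semi-concave for some K > 0 (i.e. x ↦ u(x) − K‖x‖² is concave). Then there exist a constant C > 0 and a family F of C² functions f : ℝ^d → ℝ whose second derivatives satisfy ‖D²f(x)‖ ≤ C for all x ∈ ℝ^d and all f ∈ F, such that: (i) u(x) = min_{f∈F} f(x) for every x (the minimum being attained); and (ii) for every x ∈ ℝ^d and every proximal super-differential p of u at x, there exists f ∈ F with f(x) = u(x) and ∇f(x) = p. -/

import Mathlib

open Filter Set

noncomputable section

/-- A function `ℝᵈ → ℝ` is ℤᵈ-periodic if it is invariant under integer translations. -/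
def ZPeriodic {d : ℕ} (f : EuclideanSpace ℝ (Fin d) → ℝ) : Prop :=
  ∀ (x : EuclideanSpace ℝ (Fin d)) (k : Fin d → ℤ),
    f (x + (EuclideanSpace.equiv (Fin d) ℝ).symm (fun i => (k i : ℝ))) = f x

/-- `p` is a proximal super-differential of `u` at `x`: there is a `C²` function `g` with
`g ≥ u` near `x`, `g(x) = u(x)` and `∇g(x) = p`. -/
def ProxSuperDiff {d : ℕ} (u : EuclideanSpace ℝ (Fin d) → ℝ)
    (x p : EuclideanSpace ℝ (Fin d)) : Prop :=
  ∃ g : EuclideanSpace ℝ (Fin d) → ℝ, ContDiff ℝ 2 g ∧ g x = u x ∧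
    (∀ᶠ y in nhds x, u y ≤ g y) ∧ gradient g x = p

/-!
Write `v = u - K‖·‖²`, which is concave. A paraboloid `K‖y‖² + ⟪q, y⟫ + c` lies above `u` and
touches it at `x` exactly when `q` is a supergradient of `v` at `x`, so take for `F` all
paraboloids of curvature `K` lying above `u`; their Hessians are `2K` times the identity.
A continuous concave function has a supergradient at every point (Hahn–Banach separation of
`(x, v x)` from the open strict hypograph), which gives (i). For (ii), an upper contact
function `g` at `x` turns `∇g(x) - 2Kx` into a local, hence (by concavity along segments)
global, supergradient of `v`.
-/

open scoped RealInnerProductSpace Topology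

theorem ConcaveOn.exists_le_add_strongDual {E : Type*} [TopologicalSpace E] [AddCommGroup E]
    [IsTopologicalAddGroup E] [Module ℝ E] [ContinuousSMul ℝ E] {v : E → ℝ}
    (hv : ConcaveOn ℝ univ v) (hcont : Continuous v) (x : E) :
    ∃ φ : StrongDual ℝ E, ∀ y, v y ≤ v x + φ (y - x) := by
  set S : Set (E × ℝ) := {p | p.2 < v p.1}
  have hS : Convex ℝ S := by simpa using hv.convex_strict_hypograph
  obtain ⟨Φ, hΦ⟩ := geometric_hahn_banach_open_point hS
    (isOpen_lt continuous_snd (hcont.comp continuous_fst)) (show (x, v x) ∉ S from lt_irrefl (v x))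
  set c := Φ (0, 1)
  have hΦ_apply (y : E) (t : ℝ) : Φ (y, t) = Φ (y, 0) + t * c := by
    rw [← smul_eq_mul, ← map_smul, ← map_add, Prod.smul_mk, Prod.mk_add_mk]
    simp
  have hc : 0 < c := by
    have := hΦ (x, v x - 1) (by simp [S])
    rw [hΦ_apply x (v x - 1), hΦ_apply x (v x)] at this
    nlinarith
  -- every `t < v y` makes `(y, t)` a point of `S`, where `Φ` stays below `Φ (x, v x)`
  refine ⟨-c⁻¹ • Φ.comp (.inl ℝ E ℝ), fun y => le_of_forall_lt fun t ht => ?_⟩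
  have := hΦ (y, t) ht
  rw [hΦ_apply y t, hΦ_apply x (v x)] at this
  have hsub : Φ (y - x, 0) = Φ (y, 0) - Φ (x, 0) := by
    rw [← map_sub, Prod.mk_sub_mk, sub_zero]
  simp only [smul_apply, ContinuousLinearMap.comp_apply,
    ContinuousLinearMap.inl_apply, hsub, smul_eq_mul]
  field_simp
  linarith

theorem ConcaveOn.le_add_of_hasLineDerivAt {E : Type*} [TopologicalSpace E] [AddCommGroup E]
    [ContinuousAdd E] [Module ℝ E] [ContinuousSMul ℝ E] {v g : E → ℝ} {x y : E} {g' : ℝ}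
    (hv : ConcaveOn ℝ univ v) (hle : v ≤ᶠ[𝓝 x] g) (hgx : g x = v x)
    (hg : HasLineDerivAt ℝ g g' x (y - x)) : v y ≤ v x + g' := by
  have hline : Tendsto (fun t : ℝ => x + t • (y - x)) (𝓝[>] 0) (𝓝 x) := by
    have : Continuous (fun t : ℝ => x + t • (y - x)) := by fun_prop
    simpa using (this.tendsto 0).mono_left nhdsWithin_le_nhds
  have hslope : ∀ᶠ t in 𝓝[>] (0 : ℝ), v y - v x ≤ t⁻¹ • (g (x + t • (y - x)) - g x) := by
    filter_upwards [hline.eventually hle, Ioo_mem_nhdsGT one_pos] with t hvg ⟨ht₀, ht₁⟩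
    have hconc := hv.2 (mem_univ x) (mem_univ y) (sub_nonneg.2 ht₁.le) ht₀.le (sub_add_cancel 1 t)
    have hseg : (1 - t) • x + t • y = x + t • (y - x) := by
      rw [smul_sub, sub_smul, one_smul]; abel
    rw [hseg, smul_eq_mul, smul_eq_mul] at hconc
    rw [smul_eq_mul, hgx, le_inv_mul_iff₀ ht₀]
    linarith
  linarith [ge_of_tendsto hg.tendsto_slope_zero_right hslope]

section Paraboloid

variable {E : Type*} [NormedAddCommGroup E] [InnerProductSpace ℝ E] (K : ℝ) (q : E) (c : ℝ)

def paraboloid (y : E) : ℝ := K * ‖y‖ ^ 2 + ⟪q, y⟫ + c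

theorem contDiff_paraboloid {n : WithTop ℕ∞} : ContDiff ℝ n (paraboloid K q c) :=
  ((contDiff_const.mul (contDiff_norm_sq ℝ)).add (contDiff_const.inner ℝ contDiff_id)).add
    contDiff_const

theorem hasFDerivAt_paraboloid (y : E) :
    HasFDerivAt (paraboloid K q c) ((2 * K) • innerSL ℝ y + innerSL ℝ q) y := by
  refine ((((hasStrictFDerivAt_norm_sq y).hasFDerivAt.const_mul K).add
    (innerSL ℝ q).hasFDerivAt).add_const c).congr_fderiv ?_
  ext z
  simp only [add_apply, smul_apply, innerSL_apply_apply,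
    smul_eq_mul, nsmul_eq_mul]
  ring

theorem norm_iteratedFDeriv_two_paraboloid_le (hK : 0 ≤ K) (x : E) :
    ‖iteratedFDeriv ℝ 2 (paraboloid K q c) x‖ ≤ 2 * K := by
  have hfderiv : fderiv ℝ (paraboloid K q c) = fun y => (2 * K) • innerSL ℝ y + innerSL ℝ q :=
    funext fun y => (hasFDerivAt_paraboloid K q c y).fderiv
  have hsecond : fderiv ℝ (fderiv ℝ (paraboloid K q c)) x = (2 * K) • innerSL ℝ :=
    hfderiv ▸ ((((2 * K) • innerSL ℝ).hasFDerivAt).add_const _).fderiv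
  rw [← norm_iteratedFDeriv_fderiv, ← norm_iteratedFDeriv_fderiv, norm_iteratedFDeriv_zero,
    hsecond, norm_smul, Real.norm_of_nonneg (by positivity)]
  exact mul_le_of_le_one_right (by positivity) (norm_innerSL_le ℝ)

theorem gradient_paraboloid [CompleteSpace E] (y : E) :
    gradient (paraboloid K q c) y = (2 * K) • y + q := by
  refine (hasGradientAt_iff_hasFDerivAt.2 ((hasFDerivAt_paraboloid K q c y).congr_fderiv ?_)).gradient
  ext z
  simp

variable {K q}

theorem exists_paraboloid_touching_of_le_add_inner {u : E → ℝ} {x : E}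
    (h : ∀ y, u y - K * ‖y‖ ^ 2 ≤ u x - K * ‖x‖ ^ 2 + ⟪q, y - x⟫) :
    ∃ c, u ≤ paraboloid K q c ∧ paraboloid K q c x = u x := by
  refine ⟨u x - K * ‖x‖ ^ 2 - ⟪q, x⟫, fun y => ?_, by simp only [paraboloid]; ring⟩
  have := h y
  rw [inner_sub_right] at this
  simp only [paraboloid]
  linarith

end Paraboloid

theorem le_add_inner_of_hasGradientAt_of_eventually_le {E : Type*} [NormedAddCommGroup E]
    [InnerProductSpace ℝ E] [CompleteSpace E] {u g : E → ℝ} {K : ℝ} {x p : E}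
    (hconc : ConcaveOn ℝ univ (fun x => u x - K * ‖x‖ ^ 2)) (hg : HasGradientAt g p x)
    (hgx : g x = u x) (hug : u ≤ᶠ[𝓝 x] g) (y : E) :
    u y - K * ‖y‖ ^ 2 ≤ u x - K * ‖x‖ ^ 2 + ⟪p - (2 * K) • x, y - x⟫ := by
  have hderiv : HasFDerivAt (fun z => g z - K * ‖z‖ ^ 2)
      (InnerProductSpace.toDual ℝ E p - K • 2 • innerSL ℝ x) x :=
    (hasGradientAt_iff_hasFDerivAt.1 hg).sub ((hasStrictFDerivAt_norm_sq x).hasFDerivAt.const_mul K)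
  have hslope : (InnerProductSpace.toDual ℝ E p - K • 2 • innerSL ℝ x) (y - x) =
      ⟪p - (2 * K) • x, y - x⟫ := by
    simp only [sub_apply, InnerProductSpace.toDual_apply_apply, smul_apply, coe_innerSL_apply,
      nsmul_eq_mul, Nat.cast_ofNat, smul_eq_mul, inner_sub_left, real_inner_smul_left]
    ring
  exact hconc.le_add_of_hasLineDerivAt (hug.mono fun z hz => sub_le_sub_right hz _)
    (by rw [hgx]) (hslope ▸ hderiv.hasLineDerivAt (y - x))

theorem semiconcave_is_min_of_C2_family_general {d : ℕ} (u : EuclideanSpace ℝ (Fin d) → ℝ)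
    (hu : Continuous u) (K : ℝ) (hK : 0 < K)
    (hconc : ConcaveOn ℝ Set.univ (fun x => u x - K * ‖x‖ ^ 2)) :
    ∃ C > (0:ℝ), ∃ F : Set (EuclideanSpace ℝ (Fin d) → ℝ),
      (∀ f ∈ F, ContDiff ℝ 2 f ∧ ∀ x, ‖iteratedFDeriv ℝ 2 f x‖ ≤ C) ∧
      (∀ x, (∀ f ∈ F, u x ≤ f x) ∧ ∃ f ∈ F, f x = u x) ∧
      (∀ x p, ProxSuperDiff u x p → ∃ f ∈ F, f x = u x ∧ gradient f x = p) := by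
  refine ⟨2 * K, by positivity, {f | ∃ q c, f = paraboloid K q c ∧ u ≤ f}, ?_,
    fun x => ⟨?_, ?_⟩, ?_⟩
  · rintro f ⟨q, c, rfl, -⟩
    exact ⟨contDiff_paraboloid K q c, norm_iteratedFDeriv_two_paraboloid_le K q c hK.le⟩
  · rintro f ⟨q, c, rfl, hle⟩
    exact hle x
  · obtain ⟨φ, hφ⟩ := hconc.exists_le_add_strongDual (by fun_prop) x
    obtain ⟨c, hle, hx⟩ := exists_paraboloid_touching_of_le_add_inner
      (q := (InnerProductSpace.toDual ℝ _).symm φ) fun y => by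
        simpa only [InnerProductSpace.toDual_symm_apply] using hφ y
    exact ⟨_, ⟨_, c, rfl, hle⟩, hx⟩
  · rintro x p ⟨g, hg, hgx, hug, rfl⟩
    have hgrad := ((hg.differentiable two_ne_zero).differentiableAt (x := x)).hasGradientAt
    obtain ⟨c, hle, hx⟩ := exists_paraboloid_touching_of_le_add_inner
      (le_add_inner_of_hasGradientAt_of_eventually_le hconc hgrad hgx hug)
    exact ⟨_, ⟨_, c, rfl, hle⟩, hx, by rw [gradient_paraboloid, add_sub_cancel]⟩

/-- A continuous ℤᵈ-periodic `K`-semi-concave function is the minimum of a family of `C²`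
functions with uniformly bounded second derivatives, in such a way that every proximal
super-differential is realized as the derivative of a function of the family. -/
theorem semiconcave_is_min_of_C2_family {d : ℕ} (u : EuclideanSpace ℝ (Fin d) → ℝ)
    (hu : Continuous u) (hper : ZPeriodic u) (K : ℝ) (hK : 0 < K)
    (hconc : ConcaveOn ℝ Set.univ (fun x => u x - K * ‖x‖ ^ 2)) :
    ∃ C > (0:ℝ), ∃ F : Set (EuclideanSpace ℝ (Fin d) → ℝ),
      (∀ f ∈ F, ContDiff ℝ 2 f ∧ ∀ x, ‖iteratedFDeriv ℝ 2 f x‖ ≤ C) ∧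
      (∀ x, (∀ f ∈ F, u x ≤ f x) ∧ ∃ f ∈ F, f x = u x) ∧
      (∀ x p, ProxSuperDiff u x p → ∃ f ∈ F, f x = u x ∧ gradient f x = p) :=
  semiconcave_is_min_of_C2_family_general u hu K hK hconc
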